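/- arXiv:1204.1746 — 7 statements merged into one kernel-verified Lean document; each statement's English description precedes it below -/
import Mathlib

section
/- A point p is a Z'-removable boundary point of a CNF formula G(Z) if and only if no point p* obtained from p by changing values of (some) variables of Z' satisfies G. -/
/-!
If a clause `C` without `Z'`-variables is falsified by `p` and implied by the `Z'`-clauses,
every point that differs from `p` only on `Z'` still falsifies `C`, hence some `Z'`-clause.
Conversely, take for `C` the clause falsified exactly by the points agreeing with `p`
outside `Z'`. A point satisfying the `Z'`-clauses but falsifying `C` would also satisfy every
other clause of `G`, because `p` falsifies only `Z'`-clauses and those clauses do not see `Z'`,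
so it would be a satisfying assignment reachable from `p` by changing `Z'`.
-/

universe u
variable {V : Type u}

abbrev Clause (V : Type u) := Set (V × Bool)
abbrev Cnf (V : Type u) := Set (Clause V)

/-- `p` satisfies clause `C`. -/
def SatC (p : V → Bool) (C : Clause V) : Prop := ∃ l ∈ C, p l.1 = l.2

/-- `p` satisfies CNF formula `F`. -/
def SatF (p : V → Bool) (F : Cnf V) : Prop := ∀ C ∈ F, SatC p C

def VarsC (C : Clause V) : Set V := Prod.fst '' C

def VarsF (F : Cnf V) : Set V := ⋃ C ∈ F, VarsC C

/-- `p` is a `Z'`-boundary point of `F`: `F(p)=0`, every falsified clause contains a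
variable of `Z'`, and this fails for every proper subset of `Z'`. -/
def Bnd (F : Cnf V) (Z' : Set V) (p : V → Bool) : Prop :=
  ¬ SatF p F ∧ (∀ C ∈ F, ¬ SatC p C → (VarsC C ∩ Z').Nonempty) ∧
    ∀ Z'' ⊂ Z', ∃ C ∈ F, ¬ SatC p C ∧ VarsC C ∩ Z'' = ∅

/-- `p` is `W`-removable: no point obtained from `p` by changing values of variables
of `W` satisfies `F`. -/
def Rem (F : Cnf V) (W : Set V) (p : V → Bool) : Prop :=
  ∀ p' : V → Bool, (∀ v ∉ W, p' v = p v) → ¬ SatF p' F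

/-- Discard from `F` all clauses containing a variable of `S`. -/
def Dis (F : Cnf V) (S : Set V) : Cnf V := {C ∈ F | VarsC C ∩ S = ∅}

/-- `p` is a `{z}`-boundary point of `F`. -/
def ZBnd (F : Cnf V) (z : V) (p : V → Bool) : Prop :=
  ¬ SatF p F ∧ ∀ C ∈ F, ¬ SatC p C → z ∈ VarsC C

/-- `p` is a `{z}`-removable boundary point: it is a `{z}`-boundary point and
flipping `z` does not yield a satisfying assignment. -/
def ZRem [DecidableEq V] (F : Cnf V) (z : V) (p : V → Bool) : Prop :=
  ZBnd F z p ∧ ¬ SatF (Function.update p z (!(p z))) F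

def SatCq (q : V → Option Bool) (C : Clause V) : Prop := ∃ l ∈ C, q l.1 = some l.2

/-- Cofactor of `F` under partial assignment `q`. -/
def Cof (q : V → Option Bool) (F : Cnf V) : Cnf V :=
  {C' | ∃ C ∈ F, ¬ SatCq q C ∧ C' = {l ∈ C | q l.1 ≠ some (!l.2)}}

def Dom (q : V → Option Bool) : Set V := {v | q v ≠ none}

/-- Variables of `S` are redundant in `G` (w.r.t. flippable variables `W`):
`G` has no `W`-removable `S'`-boundary point with `S' ⊆ S`. -/
def RedIn (G : Cnf V) (W S : Set V) : Prop :=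
  ∀ S' ⊆ S, ∀ p, Bnd G S' p → ¬ Rem G W p

/-- The D-sequent `(F, X', q) → X''` holds. -/
def DSeq (F : Cnf V) (X X' : Set V) (q : V → Option Bool) (X'' : Set V) : Prop :=
  RedIn (Cof q F) (X \ Dom q) X' ∧ RedIn (Dis (Cof q F) X') (X \ Dom q) X''

/-- Redundancy modulo local irredundancy: every `S'`-boundary point of `G`
(`S' ⊆ S`) that is `W`-removable in `G` is nevertheless `X`-unremovable in `F`. -/
def RedInMod (F : Cnf V) (X : Set V) (G : Cnf V) (W S : Set V) : Prop :=
  ∀ S' ⊆ S, ∀ p, Bnd G S' p → Rem G W p → ¬ Rem F X p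

/-- The D-sequent `(F, X', q) → X''` holds modulo local irredundancy. -/
def DSeqMod (F : Cnf V) (X X' : Set V) (q : V → Option Bool) (X'' : Set V) : Prop :=
  RedInMod F X (Cof q F) (X \ Dom q) X' ∧
  RedInMod F X (Dis (Cof q F) X') (X \ Dom q) X''

/-- Partial assignments `q1`, `q2` are resolvable on `x`. -/
def Resolvable (q1 q2 : V → Option Bool) (x : V) : Prop :=
  (∃ b, q1 x = some b ∧ q2 x = some (!b)) ∧
  ∀ v, v ≠ x → ∀ b1 b2, q1 v = some b1 → q2 v = some b2 → b1 = b2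

/-- Resolvent of partial assignments `q1`, `q2` on `x`. -/
def ResPA [DecidableEq V] (q1 q2 : V → Option Bool) (x : V) : V → Option Bool :=
  fun v => if v = x then none else match q1 v with | some b => some b | none => q2 v

theorem satC_iff_of_eqOn {C : Clause V} {p q : V → Bool} (h : Set.EqOn q p (VarsC C)) :
    SatC q C ↔ SatC p C := by
  unfold SatC
  refine exists_congr fun l => and_congr_right fun hl => ?_
  rw [h ⟨l, hl, rfl⟩]

theorem satC_iff_of_eqOn_compl {C : Clause V} {Z' : Set V} {p q : V → Bool}
    (hC : VarsC C ∩ Z' = ∅) (hpq : ∀ v ∉ Z', q v = p v) : SatC q C ↔ SatC p C :=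
  satC_iff_of_eqOn fun v hv => hpq v fun hvZ => hC.subset ⟨hv, hvZ⟩

def blockingClause (Z' : Set V) (p : V → Bool) : Clause V := {l | l.1 ∉ Z' ∧ l.2 = !(p l.1)}

theorem satC_blockingClause_iff {Z' : Set V} {p q : V → Bool} :
    SatC q (blockingClause Z' p) ↔ ∃ v ∉ Z', q v ≠ p v := by
  constructor
  · rintro ⟨⟨v, b⟩, ⟨hv, hb⟩, hq⟩
    exact ⟨v, hv, by simp_all⟩
  · rintro ⟨v, hv, hq⟩
    exact ⟨(v, !(p v)), ⟨hv, rfl⟩, Bool.eq_not_iff.2 hq⟩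

theorem not_satC_blockingClause (Z' : Set V) (p : V → Bool) :
    ¬ SatC p (blockingClause Z' p) := by
  simp [satC_blockingClause_iff]

theorem varsC_blockingClause_inter (Z' : Set V) (p : V → Bool) :
    VarsC (blockingClause Z' p) ∩ Z' = ∅ := by
  ext v
  simp only [VarsC, blockingClause, Set.mem_inter_iff, Set.mem_image, Set.mem_ofPred_eq,
    Set.mem_empty_iff_false, iff_false, not_and]
  rintro ⟨l, ⟨hl, -⟩, rfl⟩
  exact hl

theorem Bnd.varsC_inter_nonempty {G : Cnf V} {Z'' Z' : Set V} {p : V → Bool}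
    (hb : Bnd G Z'' p) (hZ : Z'' ⊆ Z') {D : Clause V} (hD : D ∈ G) (hpD : ¬ SatC p D) :
    (VarsC D ∩ Z').Nonempty :=
  (hb.2.1 D hD hpD).mono (Set.inter_subset_inter_right _ hZ)

theorem rem_of_implied_clause {G : Cnf V} {Z' : Set V} {p : V → Bool} {C : Clause V}
    (hCp : ¬ SatC p C) (hCZ : VarsC C ∩ Z' = ∅)
    (himp : ∀ q : V → Bool, (∀ D ∈ G, (VarsC D ∩ Z').Nonempty → SatC q D) → SatC q C) :
    Rem G Z' p := fun q hpq hq =>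
  hCp ((satC_iff_of_eqOn_compl hCZ hpq).1 (himp q fun D hD _ => hq D hD))

theorem blockingClause_implied_of_rem {G : Cnf V} {Z' : Set V} {p : V → Bool}
    (hfals : ∀ D ∈ G, ¬ SatC p D → (VarsC D ∩ Z').Nonempty) (hrem : Rem G Z' p)
    (q : V → Bool) (hq : ∀ D ∈ G, (VarsC D ∩ Z').Nonempty → SatC q D) :
    SatC q (blockingClause Z' p) := by
  by_contra hqC
  have hpq : ∀ v ∉ Z', q v = p v := by
    simpa [satC_blockingClause_iff] using hqC
  refine hrem q hpq fun D hD => ?_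
  rcases (VarsC D ∩ Z').eq_empty_or_nonempty with hDZ | hDZ
  · by_contra hqD
    have hpD : ¬ SatC p D := by rwa [← satC_iff_of_eqOn_compl hDZ hpq]
    exact (hfals D hD hpD).ne_empty hDZ
  · exact hq D hD hDZ

/-- A `Z''`-boundary point (`Z'' ⊆ Z'`) `p` is a `Z'`-removable boundary point of `G`
(i.e. there is a clause `C` falsified by `p`, with no variable of `Z'`, implied by the
conjunction of the `Z'`-clauses of `G`) iff no point obtained from `p` by changing
values of (some) variables of `Z'` satisfies `G`. -/
theorem stmt_0 (G : Cnf V) (Z' : Set V) (p : V → Bool)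
    (hb : ∃ Z'' ⊆ Z', Bnd G Z'' p) :
    (∃ C : Clause V, ¬ SatC p C ∧ VarsC C ∩ Z' = ∅ ∧
        ∀ q : V → Bool, (∀ D ∈ G, (VarsC D ∩ Z').Nonempty → SatC q D) → SatC q C) ↔
      Rem G Z' p := by
  obtain ⟨Z'', hZ, hbnd⟩ := hb
  constructor
  · rintro ⟨C, hCp, hCZ, himp⟩
    exact rem_of_implied_clause hCp hCZ himp
  · intro hrem
    exact ⟨blockingClause Z' p, not_satC_blockingClause Z' p, varsC_blockingClause_inter Z' p,
      blockingClause_implied_of_rem (fun _ hD hpD => hbnd.varsC_inter_nonempty hZ hD hpD) hrem⟩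
end

section
/- If z is a monotone variable of a CNF formula G(Z) (i.e., all clauses of G containing z contain its literal of only one polarity), then z is redundant in G, i.e., G has no {z}-removable boundary point. -/
universe u
variable {V : Type u}

section Monotone

variable {C : Clause V} {z : V}

theorem satC_update_iff_of_not_mem_varsC [DecidableEq V] (hz : z ∉ VarsC C)
    (p : V → Bool) (c : Bool) : SatC (Function.update p z c) C ↔ SatC p C := by
  refine exists_congr fun l => and_congr_right fun hl => ?_
  have hlz : l.1 ≠ z := fun h => hz ⟨l, hl, h⟩
  rw [Function.update_of_ne hlz]

theorem satC_of_mem_varsC_of_not_mem {p : V → Bool} {b : Bool} (hC : (z, !b) ∉ C)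
    (hz : z ∈ VarsC C) (hpz : p z = b) : SatC p C := by
  obtain ⟨⟨v, c⟩, hl, rfl⟩ := hz
  have hc : c = b := by
    by_contra hcb
    exact hC (by rwa [← Bool.eq_not.mpr hcb])
  exact ⟨(v, c), hl, hpz.trans hc.symm⟩

/-- Changing only `z` cannot repair a clause that does not mention `z`. -/
theorem ZBnd.exists_not_satC_update_of_mem_varsC [DecidableEq V] {G : Cnf V}
    {p : V → Bool} (hp : ZBnd G z p) {c : Bool}
    (h : ¬ SatF (Function.update p z c) G) :
    ∃ C ∈ G, ¬ SatC (Function.update p z c) C ∧ z ∈ VarsC C := by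
  simp only [SatF, not_forall] at h
  obtain ⟨C, hCG, hC⟩ := h
  refine ⟨C, hCG, hC, ?_⟩
  by_contra hz
  exact hz (hp.2 C hCG ((satC_update_iff_of_not_mem_varsC hz p c).not.mp hC))

end Monotone

/-- If `z` is a monotone variable of `G` (its literals occur with only one polarity),
then `z` is redundant in `G`: `G` has no `{z}`-removable boundary point. -/
theorem stmt_2 [DecidableEq V] (G : Cnf V) (z : V)
    (hmono : ∃ b : Bool, ∀ C ∈ G, (z, !b) ∉ C) :
    ∀ p : V → Bool, ¬ ZRem G z p := by
  obtain ⟨b, hb⟩ := hmono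
  rintro p ⟨hbnd, hflip⟩
  -- One of `p` and its flip assigns `z` the polarity `b`, which satisfies every clause with `z`.
  have hunsat : ¬ SatF (Function.update p z b) G := by
    by_cases hpz : p z = b
    · rw [← hpz, Function.update_eq_self]
      exact hbnd.1
    · rwa [← Bool.eq_not.mpr (Ne.symm hpz)] at hflip
  obtain ⟨C, hCG, hC, hz⟩ := hbnd.exists_not_satC_update_of_mem_varsC hunsat
  exact hC (satC_of_mem_varsC_of_not_mem (hb C hCG) hz (Function.update_self z b p))
end

section
/- Let G(Z) be a CNF formula with no {z}-removable boundary points, and let C be a clause implied by G. Then G ∧ C has no {z}-removable boundary point. -/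
universe u
variable {V : Type u}

theorem satF_insert_iff_of_implies {G : Cnf V} {C : Clause V}
    (himp : ∀ p : V → Bool, SatF p G → SatC p C) (p : V → Bool) :
    SatF p (insert C G) ↔ SatF p G :=
  ⟨fun hp D hD => hp D (Set.mem_insert_of_mem C hD),
    fun hp D hD => hD.elim (fun e => e ▸ himp p hp) (hp D)⟩

theorem ZBnd.of_subset {F G : Cnf V} {z : V} {p : V → Bool} (hF : ZBnd F z p) (hGF : G ⊆ F)
    (hG : ¬ SatF p G) : ZBnd G z p :=
  ⟨hG, fun D hD hpD => hF.2 D (hGF hD) hpD⟩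

theorem ZRem.of_insert_of_implies [DecidableEq V] {G : Cnf V} {z : V} {C : Clause V}
    (himp : ∀ p : V → Bool, SatF p G → SatC p C) {p : V → Bool}
    (hp : ZRem (insert C G) z p) : ZRem G z p := by
  obtain ⟨hbnd, hflip⟩ := hp
  rw [satF_insert_iff_of_implies himp] at hflip
  have hG : ¬ SatF p G := (satF_insert_iff_of_implies himp p).not.mp hbnd.1
  exact ⟨hbnd.of_subset (Set.subset_insert C G) hG, hflip⟩

/-- If `G` has no `{z}`-removable boundary points and clause `C` is implied by `G`,
then `G ∧ C` has no `{z}`-removable boundary point. -/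
theorem stmt_5 [DecidableEq V] (G : Cnf V) (z : V) (C : Clause V)
    (h : ∀ p : V → Bool, ¬ ZRem G z p)
    (himp : ∀ p : V → Bool, SatF p G → SatC p C) :
    ∀ p : V → Bool, ¬ ZRem (insert C G) z p := by
  exact fun p hp => h p (hp.of_insert_of_implies himp)
end

section
/- Let G(Z) be a CNF formula with no {z}-removable boundary points, and let C be a clause not containing the variable z. Then G ∧ C has no {z}-removable boundary point. -/
/-! A `{z}`-boundary point `p` of `G ∧ C` must satisfy `C`, since every clause it falsifies
contains `z`. As `z ∉ C`, flipping `z` keeps `C` satisfied, so `p` is already a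
`{z}`-removable boundary point of `G`. -/

universe u
variable {V : Type u}

theorem satC_update_iff_of_notMem_varsC [DecidableEq V] {C : Clause V} {z : V}
    (hz : z ∉ VarsC C) (p : V → Bool) (b : Bool) :
    SatC (Function.update p z b) C ↔ SatC p C := by
  refine exists_congr fun l => and_congr_right fun hl => ?_
  rw [Function.update_of_ne fun e => hz ⟨l, hl, e⟩]

theorem satF_insert_iff {p : V → Bool} {C : Clause V} {G : Cnf V} :
    SatF p (insert C G) ↔ SatC p C ∧ SatF p G :=
  Set.forall_mem_insert

section ZBnd

variable {G : Cnf V} {C : Clause V} {z : V} {p : V → Bool}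

theorem ZBnd.satC_of_notMem_varsC (hp : ZBnd (insert C G) z p) (hz : z ∉ VarsC C) :
    SatC p C :=
  by_contra fun hC => hz (hp.2 C (Set.mem_insert C G) hC)

theorem ZBnd.of_insert (hp : ZBnd (insert C G) z p) (hC : SatC p C) : ZBnd G z p :=
  ⟨fun hG => hp.1 (satF_insert_iff.2 ⟨hC, hG⟩),
    fun D hD => hp.2 D (Set.mem_insert_of_mem C hD)⟩

theorem ZRem.of_insert_of_notMem_varsC [DecidableEq V] (hp : ZRem (insert C G) z p)
    (hz : z ∉ VarsC C) : ZRem G z p := by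
  have hC := hp.1.satC_of_notMem_varsC hz
  refine ⟨hp.1.of_insert hC, fun hG => hp.2 (satF_insert_iff.2 ⟨?_, hG⟩)⟩
  exact (satC_update_iff_of_notMem_varsC hz p _).2 hC

end ZBnd

/-- If `G` has no `{z}`-removable boundary points and clause `C` does not contain `z`,
then `G ∧ C` has no `{z}`-removable boundary point. -/
theorem stmt_6 [DecidableEq V] (G : Cnf V) (z : V) (C : Clause V)
    (h : ∀ p : V → Bool, ¬ ZRem G z p)
    (hz : z ∉ VarsC C) :
    ∀ p : V → Bool, ¬ ZRem (insert C G) z p :=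
  fun p hp => h p (hp.of_insert_of_notMem_varsC hz)
end

section
/- Let G(Z) be a CNF formula with no {z}-removable boundary points, and let C be a clause of G that contains the variable z. Then the formula G' = G ∖ {C} has no {z}-removable boundary point. -/
universe u
variable {V : Type u}

theorem SatF.mono {p : V → Bool} {F F' : Cnf V} (hF : SatF p F) (hsub : F' ⊆ F) :
    SatF p F' :=
  fun C hC => hF C (hsub hC)

section

variable {F F' : Cnf V} {z : V} {p : V → Bool}

theorem ZBnd.mono (hp : ZBnd F' z p) (hsub : F' ⊆ F) (hz : ∀ C ∈ F, C ∉ F' → z ∈ VarsC C) :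
    ZBnd F z p := by
  obtain ⟨hunsat, hfalsified⟩ := hp
  refine ⟨fun hsat => hunsat (hsat.mono hsub), fun C hC hnsat => ?_⟩
  by_cases hC' : C ∈ F'
  · exact hfalsified C hC' hnsat
  · exact hz C hC hC'

theorem ZRem.mono [DecidableEq V] (hp : ZRem F' z p) (hsub : F' ⊆ F)
    (hz : ∀ C ∈ F, C ∉ F' → z ∈ VarsC C) : ZRem F z p :=
  ⟨hp.1.mono hsub hz, fun hsat => hp.2 (hsat.mono hsub)⟩

end

theorem stmt_7_general [DecidableEq V] (G : Cnf V) (z : V) (C : Clause V)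
    (h : ∀ p : V → Bool, ¬ ZRem G z p)
    (hz : z ∈ VarsC C) :
    ∀ p : V → Bool, ¬ ZRem (G \ {C}) z p := by
  intro p hp
  refine h p (hp.mono Set.sdiff_subset fun C' hC' hC'_notin => ?_)
  obtain rfl : C' = C := by simpa [hC'] using hC'_notin
  exact hz

/-- If `G` has no `{z}`-removable boundary points and `C` is a `{z}`-clause of `G`,
then `G' = G ∖ {C}` has no `{z}`-removable boundary point. -/
theorem stmt_7 [DecidableEq V] (G : Cnf V) (z : V) (C : Clause V)
    (h : ∀ p : V → Bool, ¬ ZRem G z p)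
    (hC : C ∈ G) (hz : z ∈ VarsC C) :
    ∀ p : V → Bool, ¬ ZRem (G \ {C}) z p :=
  stmt_7_general G z C h hz
end

section
/- There exist a CNF formula F(X,Y) and a formula F⁺ obtained from F by adding a resolvent of clauses of F, such that the D-sequent (F⁺, ∅, ∅) → X holds but (F, ∅, ∅) → X does not. Concretely, for X = {x}, Y = {y}, F = (x ∨ y) ∧ (¬x ∨ y) and F⁺ = F ∧ y: the variable x is redundant in F⁺ but not redundant in F. -/
universe u
variable {V : Type u}

/-- Variable `0` plays the role of `x`, variable `1` the role of `y`. -/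
def C1 : Clause (Fin 2) := {((0 : Fin 2), true), ((1 : Fin 2), true)}
def C2 : Clause (Fin 2) := {((0 : Fin 2), false), ((1 : Fin 2), true)}
def Cy : Clause (Fin 2) := {((1 : Fin 2), true)}

def Fex : Cnf (Fin 2) := {C1, C2}
def FexPlus : Cnf (Fin 2) := insert Cy Fex

/-! The resolvent `y` avoids `x` and is contained in every clause of `F⁺`, so an
`{x}`-boundary point of `F⁺` must satisfy it, and then it satisfies all of `F⁺`. In `F`, by
contrast, every clause contains `x`, and `y = 0` falsifies `F` whatever the value of `x`. -/

theorem SatC.mono {p : V → Bool} {C D : Clause V} (h : C ⊆ D) (hC : SatC p C) : SatC p D :=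
  let ⟨l, hl, hpl⟩ := hC
  ⟨l, h hl, hpl⟩

theorem ZBnd.satC {F : Cnf V} {z : V} {p : V → Bool} (hp : ZBnd F z p) {C : Clause V}
    (hC : C ∈ F) (hz : z ∉ VarsC C) : SatC p C :=
  not_not.mp fun hn => hz (hp.2 C hC hn)

theorem not_zBnd_of_subset_forall {F : Cnf V} {z : V} {C : Clause V} (hC : C ∈ F)
    (hz : z ∉ VarsC C) (hsub : ∀ D ∈ F, C ⊆ D) (p : V → Bool) : ¬ ZBnd F z p :=
  fun hp => hp.1 fun D hD => (hp.satC hC hz).mono (hsub D hD)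

theorem zBnd_iff_of_forall_mem_varsC {F : Cnf V} {z : V} (h : ∀ C ∈ F, z ∈ VarsC C)
    (p : V → Bool) : ZBnd F z p ↔ ¬ SatF p F :=
  ⟨And.left, fun hp => ⟨hp, fun C hC _ => h C hC⟩⟩

theorem cy_subset_forall_fexPlus : ∀ D ∈ FexPlus, Cy ⊆ D := by
  simp [FexPlus, Fex, C1, C2, Cy]

theorem zero_notMem_varsC_cy : (0 : Fin 2) ∉ VarsC Cy := by
  simp [VarsC, Cy]

theorem zero_mem_varsC_fex : ∀ C ∈ Fex, (0 : Fin 2) ∈ VarsC C := by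
  simp [Fex, VarsC, C1, C2]

theorem not_satF_fex_of_apply_one_eq_false {p : Fin 2 → Bool} (hy : p 1 = false) :
    ¬ SatF p Fex := by
  cases hx : p 0 <;> simp [SatF, SatC, Fex, C1, C2, hx, hy]

/-- For `F = (x ∨ y) ∧ (¬x ∨ y)` and `F⁺ = F ∧ y` (adding the resolvent `y`):
`x` is redundant in `F⁺` (no removable `{x}`-boundary point), while the point
`(x=0, y=0)` is a removable `{x}`-boundary point of `F`, so `x` is not redundant
in `F`. -/
theorem stmt_11 :
    (∀ p : Fin 2 → Bool, ¬ ZRem FexPlus 0 p) ∧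
      ZRem Fex 0 (fun _ => false) := by
  refine ⟨fun p hp => not_zBnd_of_subset_forall (Set.mem_insert Cy Fex) zero_notMem_varsC_cy
    cy_subset_forall_fexPlus p hp.1, ?_, ?_⟩
  · exact (zBnd_iff_of_forall_mem_varsC zero_mem_varsC_fex _).2
      (not_satF_fex_of_apply_one_eq_false rfl)
  · exact not_satF_fex_of_apply_one_eq_false rfl
end

section
/- Chained redundancy yields full redundancy: let X = {x₁,…,x_k}, and suppose that for each i, the variable x_i is redundant in the formula Dis(F, {x₁,…,x_{i-1}}). Then the variables of X are redundant in F(X,Y), and hence Dis(F,X) is logically equivalent to ∃X.F(X,Y). -/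
universe u
variable {V : Type u}

/-!
Induction on `i`. A point satisfying `Dis(F, {x₁,…,x_i})` either already satisfies
`G = Dis(F, {x₁,…,x_{i-1}})` or falsifies only clauses of `G` containing `x_i`, i.e. it is an
`{x_i}`-boundary point of `G`; redundancy of `x_i` in `G` means it is not removable, so changing
values of `X` makes it satisfy `G`. Conversely a satisfying point of `F` satisfies `Dis(F, X)`
after arbitrary changes on `X`, which gives the equivalence, and every `X`-removable boundary
point of `F` would satisfy `Dis(F, X)`, which gives redundancy of `X`.
-/

section Redundancy

variable {F : Cnf V} {S T W : Set V} {p p' : V → Bool}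

lemma satC_congr_of_inter_eq_empty {C : Clause V} (hC : VarsC C ∩ S = ∅)
    (hpp' : ∀ v ∉ S, p' v = p v) : SatC p' C ↔ SatC p C := by
  refine exists_congr fun l => and_congr_right fun hl => ?_
  have hlS : l.1 ∉ S := fun hS => Set.eq_empty_iff_forall_notMem.1 hC l.1 ⟨⟨l, hl, rfl⟩, hS⟩
  rw [hpp' l.1 hlS]

lemma SatF.dis_of_eqOn_compl (hp' : SatF p' F) (hpp' : ∀ v ∉ S, p' v = p v) :
    SatF p (Dis F S) :=
  fun C hC => (satC_congr_of_inter_eq_empty hC.2 hpp').1 (hp' C hC.1)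

lemma dis_anti (hST : S ⊆ T) : Dis F T ⊆ Dis F S :=
  fun _ hC => ⟨hC.1, Set.subset_eq_empty (Set.inter_subset_inter_right _ hST) hC.2⟩

lemma dis_dis : Dis (Dis F S) T = Dis F (S ∪ T) := by
  ext C
  simp only [Dis, Set.mem_ofPred_eq, Set.inter_union_distrib_left, Set.union_empty_iff, and_assoc]

lemma Bnd.satF_dis (hp : Bnd F S p) : SatF p (Dis F S) :=
  fun C hC => by_contra fun hns => (hp.2.1 C hC.1 hns).ne_empty hC.2

lemma bnd_singleton_of_satF_dis {x : V} (hp : ¬ SatF p F) (hdis : SatF p (Dis F {x})) :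
    Bnd F {x} p := by
  refine ⟨hp, fun C hC hns => ?_, fun Z hZ => ?_⟩
  · by_contra hempty
    exact hns (hdis C ⟨hC, Set.not_nonempty_iff_eq_empty.1 hempty⟩)
  · obtain rfl := Set.ssubset_singleton_iff.1 hZ
    obtain ⟨C, hC, hns⟩ : ∃ C ∈ F, ¬ SatC p C := by simpa [SatF] using hp
    exact ⟨C, hC, hns, Set.inter_empty _⟩

lemma exists_satF_of_satF_dis_singleton {x : V} (hx : ∀ p, Bnd F {x} p → ¬ Rem F W p)
    (hp : SatF p (Dis F {x})) : ∃ p', (∀ v ∉ W, p' v = p v) ∧ SatF p' F := by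
  by_cases hsat : SatF p F
  · exact ⟨p, fun _ _ => rfl, hsat⟩
  · simpa [Rem] using hx p (bnd_singleton_of_satF_dis hsat hp)

end Redundancy

lemma image_lt_succ_eq {α : Type*} {k : ℕ} (xs : Fin k → α) (i : Fin k) :
    xs '' {j : Fin k | (j : ℕ) < i + 1} = xs '' {j : Fin k | j < i} ∪ {xs i} := by
  rw [← Set.image_singleton, ← Set.image_union]
  congr 1
  ext j
  simp only [Set.mem_ofPred_eq, Set.mem_union, Set.mem_singleton_iff, Fin.lt_def, Fin.ext_iff]
  omega

lemma exists_satF_of_satF_dis_image_lt (F : Cnf V) {k : ℕ} (xs : Fin k → V)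
    (h : ∀ i : Fin k, ∀ p : V → Bool,
        Bnd (Dis F (xs '' {j : Fin k | j < i})) {xs i} p →
          ¬ Rem (Dis F (xs '' {j : Fin k | j < i})) (Set.range xs) p) :
    ∀ n ≤ k, ∀ p : V → Bool, SatF p (Dis F (xs '' {j : Fin k | (j : ℕ) < n})) →
      ∃ p' : V → Bool, (∀ v ∉ Set.range xs, p' v = p v) ∧ SatF p' F := by
  intro n
  induction n with
  | zero =>
    intro _ p hp
    exact ⟨p, fun _ _ => rfl, fun C hC => hp C ⟨hC, by simp⟩⟩
  | succ n ih =>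
    intro hn p hp
    let i : Fin k := ⟨n, hn⟩
    rw [image_lt_succ_eq xs i, ← dis_dis] at hp
    obtain ⟨p₁, hp₁p, hsat₁⟩ := exists_satF_of_satF_dis_singleton (h i) hp
    obtain ⟨p₂, hp₂p₁, hsat₂⟩ := ih (Nat.le_of_succ_le hn) p₁ hsat₁
    exact ⟨p₂, fun v hv => (hp₂p₁ v hv).trans (hp₁p v hv), hsat₂⟩

lemma image_lt_eq_range {α : Type*} {k : ℕ} (xs : Fin k → α) :
    xs '' {j : Fin k | (j : ℕ) < k} = Set.range xs := by
  simp

theorem stmt_16_general (F : Cnf V) (k : ℕ) (xs : Fin k → V)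
    (h : ∀ i : Fin k, ∀ p : V → Bool,
        Bnd (Dis F (xs '' {j : Fin k | j < i})) {xs i} p →
          ¬ Rem (Dis F (xs '' {j : Fin k | j < i})) (Set.range xs) p) :
    RedIn F (Set.range xs) (Set.range xs) ∧
      ∀ p : V → Bool,
        (∃ p' : V → Bool, (∀ v ∉ Set.range xs, p' v = p v) ∧ SatF p' F) ↔
          SatF p (Dis F (Set.range xs)) := by
  have extend := exists_satF_of_satF_dis_image_lt F xs h k le_rfl
  rw [image_lt_eq_range] at extend
  refine ⟨fun S' hS' p hbnd hrem => ?_, fun p => ⟨?_, extend p⟩⟩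
  · obtain ⟨p', hp'p, hsat⟩ := extend p fun C hC => hbnd.satF_dis C (dis_anti hS' hC)
    exact hrem p' hp'p hsat
  · rintro ⟨p', hp'p, hsat⟩
    exact hsat.dis_of_eqOn_compl hp'p

/-- Chained redundancy yields full redundancy: let `X = {x₁,…,x_k}` and suppose for
each `i` the variable `x_i` is redundant in `Dis(F, {x₁,…,x_{i-1}})`. Then the
variables of `X` are redundant in `F`, and `Dis(F,X)` is logically equivalent to
`∃X.F(X,Y)`. -/
theorem stmt_16 (F : Cnf V) (k : ℕ) (xs : Fin k → V) (hinj : Function.Injective xs)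
    (h : ∀ i : Fin k, ∀ p : V → Bool,
        Bnd (Dis F (xs '' {j : Fin k | j < i})) {xs i} p →
          ¬ Rem (Dis F (xs '' {j : Fin k | j < i})) (Set.range xs) p) :
    RedIn F (Set.range xs) (Set.range xs) ∧
      ∀ p : V → Bool,
        (∃ p' : V → Bool, (∀ v ∉ Set.range xs, p' v = p v) ∧ SatF p' F) ↔
          SatF p (Dis F (Set.range xs)) :=
  stmt_16_general F k xs h
end
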